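/- For every natural number n ≥ 1, lcm of the odd numbers between 1 and n equals (lcm of all numbers from 1 to n) divided by 2^{⌊log₂ n⌋}. -/

import Mathlib

theorem stmt7 (n : ℕ) (hn : 1 ≤ n) :
    ((Finset.Icc 1 n).filter (fun m => Odd m)).lcm id =
      (Finset.Icc 1 n).lcm id / 2 ^ Nat.log 2 n := by
  set L := Nat.log 2 n with hL
  set O := ((Finset.Icc 1 n).filter (fun m => Odd m)).lcm id with hO
  have hn0 : n ≠ 0 := by omega
  -- O is odd
  have hOodd : Odd O := by
    have key : ∀ s : Finset ℕ, (∀ m ∈ s, Odd m) → ¬ 2 ∣ s.lcm id := by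
      intro s
      induction s using Finset.induction with
      | empty => simp
      | insert _ _ ha ih =>
        rename_i a s
        intro hodd hdvd
        rw [Finset.lcm_insert] at hdvd
        rcases (Nat.Prime.dvd_mul Nat.prime_two).1
            (hdvd.trans (Nat.lcm_dvd_mul _ _)) with h | h
        · have := hodd a (Finset.mem_insert_self a s)
          simp only [id] at h
          rw [Nat.odd_iff] at this
          omega
        · exact ih (fun m hm => hodd m (Finset.mem_insert_of_mem hm)) h
    rw [Nat.odd_iff, ← Nat.two_dvd_ne_zero]
    exact key _ (fun m hm => (Finset.mem_filter.1 hm).2)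
  have hcop : Nat.Coprime (2 ^ L) O := Nat.Coprime.pow_left _ hOodd.coprime_two_left
  -- 2^L * O ∣ lcm
  have h1 : 2 ^ L * O ∣ (Finset.Icc 1 n).lcm id := by
    refine hcop.mul_dvd_of_dvd_of_dvd ?_ ?_
    · have hmem : 2 ^ L ∈ Finset.Icc 1 n := by
        rw [Finset.mem_Icc]
        exact ⟨Nat.one_le_two_pow, Nat.pow_log_le_self 2 hn0⟩
      exact Finset.dvd_lcm hmem
    · refine Finset.lcm_dvd fun b hb => ?_
      exact Finset.dvd_lcm (Finset.mem_filter.1 hb |>.1)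
  -- lcm ∣ 2^L * O
  have h2 : (Finset.Icc 1 n).lcm id ∣ 2 ^ L * O := by
    refine Finset.lcm_dvd fun m hm => ?_
    rw [Finset.mem_Icc] at hm
    have hm0 : m ≠ 0 := by omega
    set k := m.factorization 2 with hk
    set o := m / 2 ^ k with ho
    have hmo : 2 ^ k * o = m := Nat.ordProj_mul_ordCompl_eq_self m 2
    have hoodd : Odd o := by
      have := Nat.not_dvd_ordCompl Nat.prime_two hm0
      rwa [Nat.odd_iff, ← Nat.two_dvd_ne_zero]
    have hodvd : o ∣ m := ⟨2 ^ k, by rw [← hmo]; ring⟩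
    have homem : o ∈ (Finset.Icc 1 n).filter (fun m => Odd m) := by
      refine Finset.mem_filter.2 ⟨Finset.mem_Icc.2 ⟨?_, ?_⟩, hoodd⟩
      · exact Nat.ordCompl_pos 2 hm0
      · exact le_trans (Nat.le_of_dvd (by omega) hodvd) hm.2
    have hkL : k ≤ L := by
      have h2k : 2 ^ k ∣ m := Nat.ordProj_dvd m 2
      have : 2 ^ k ≤ n := le_trans (Nat.le_of_dvd (by omega) h2k) hm.2
      exact (Nat.le_log_iff_pow_le one_lt_two hn0).2 this
    calc (id m : ℕ) = 2 ^ k * o := hmo.symm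
      _ ∣ 2 ^ L * O := mul_dvd_mul (pow_dvd_pow 2 hkL) (Finset.dvd_lcm homem)
  have heq : (Finset.Icc 1 n).lcm id = 2 ^ L * O := Nat.dvd_antisymm h2 h1
  rw [heq, Nat.mul_div_cancel_left _ (Nat.two_pow_pos L)]
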